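/- arXiv:1603.05609 — 5 statements merged into one kernel-verified Lean document; each statement's English description precedes it below -/
import Mathlib

section
/- The set of medians of a probability measure μ on ℝ (points m with μ((-∞,m]) ≥ 1/2 and μ([m,∞)) ≥ 1/2) equals the intersection of all compact intervals [a,b] with μ([a,b]) > 1/2. -/
/-!
An interval `[a, b]` of mass `> 1/2` meets every measurable set of mass `≥ 1/2`, so it meets
both `Iic m` and `Ici m` for a median `m`, i.e. `a ≤ m ≤ b`. Conversely, if `μ (Iic m) < 1/2`
then `μ (Ioi m) > 1/2`; by inner regularity some compact `K ⊆ Ioi m` has mass `> 1/2`, and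
`[sInf K, sSup K]` is then an interval of mass `> 1/2` missing `m`.
-/

open MeasureTheory Set
open scoped ENNReal

theorem half_lt_measure_compl_iff {Ω : Type*} [MeasurableSpace Ω] {μ : Measure Ω}
    [IsProbabilityMeasure μ] {s : Set Ω} (hs : MeasurableSet s) :
    1/2 < μ sᶜ ↔ μ s < 1/2 := by
  rw [prob_compl_eq_one_sub hs, lt_tsub_comm, one_div, ENNReal.one_sub_inv_two]

theorem exists_Icc_subset_lt_measure {α : Type*} [ConditionallyCompleteLinearOrder α]
    [TopologicalSpace α] [OrderTopology α] [MeasurableSpace α] {μ : Measure α} [μ.InnerRegular]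
    {s : Set α} (hs : MeasurableSet s) (hsc : s.OrdConnected) {r : ℝ≥0∞} (hr : r < μ s) :
    ∃ a b, Icc a b ⊆ s ∧ r < μ (Icc a b) := by
  obtain ⟨K, hKs, hK, hrK⟩ := hs.exists_lt_isCompact hr
  have hKne : K.Nonempty := nonempty_of_measure_ne_zero (ne_bot_of_gt hrK)
  refine ⟨sInf K, sSup K, hsc.out (hKs (hK.sInf_mem hKne)) (hKs (hK.sSup_mem hKne)), ?_⟩
  exact hrK.trans_le (measure_mono (subset_Icc_csInf_csSup hK.bddBelow hK.bddAbove))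

theorem half_le_measure_iff_forall_Icc_inter_nonempty {μ : Measure ℝ} [IsProbabilityMeasure μ]
    {s : Set ℝ} (hs : MeasurableSet s) (hsc : sᶜ.OrdConnected) :
    1/2 ≤ μ s ↔ ∀ a b, 1/2 < μ (Icc a b) → (Icc a b ∩ s).Nonempty := by
  constructor
  · intro hle a b hab
    by_contra hempty
    have hsub : Icc a b ⊆ sᶜ := fun x hx hxs => hempty ⟨x, hx, hxs⟩
    exact hle.not_gt ((half_lt_measure_compl_iff hs).1 (hab.trans_le (measure_mono hsub)))
  · intro h
    by_contra! hlt
    obtain ⟨a, b, hsub, hab⟩ :=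
      exists_Icc_subset_lt_measure hs.compl hsc ((half_lt_measure_compl_iff hs).2 hlt)
    obtain ⟨x, hxI, hxs⟩ := h a b hab
    exact hsub hxI hxs

/-- The set of medians of a probability measure on ℝ equals the intersection of all
compact intervals `[a,b]` with `μ [a,b] > 1/2`. -/
theorem median_set_eq_iInter_intervals (μ : Measure ℝ) [IsProbabilityMeasure μ] :
    {m : ℝ | 1/2 ≤ μ (Set.Iic m) ∧ 1/2 ≤ μ (Set.Ici m)} =
      ⋂₀ {I : Set ℝ | ∃ a b : ℝ, I = Set.Icc a b ∧ 1/2 < μ I} := by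
  ext m
  rw [mem_ofPred_eq,
    half_le_measure_iff_forall_Icc_inter_nonempty measurableSet_Iic
      (by rw [compl_Iic]; exact ordConnected_Ioi),
    half_le_measure_iff_forall_Icc_inter_nonempty measurableSet_Ici
      (by rw [compl_Ici]; exact ordConnected_Iio)]
  constructor
  · rintro ⟨hleft, hright⟩ _ ⟨a, b, rfl, hab⟩
    obtain ⟨x, hx, hxm⟩ := hleft a b hab
    obtain ⟨y, hy, hmy⟩ := hright a b hab
    exact ⟨hx.1.trans hxm, hmy.trans hy.2⟩
  · intro hm
    exact ⟨fun a b hab => ⟨m, hm _ ⟨a, b, rfl, hab⟩, self_mem_Iic⟩,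
      fun a b hab => ⟨m, hm _ ⟨a, b, rfl, hab⟩, self_mem_Ici⟩⟩
end

section
/- For any probability measure μ on ℝ^d there exists a point x ∈ ℝ^d whose halfspace (Tukey) depth satisfies D(x;μ) ≥ 1/(d+1). -/
/-!
Call a point `β`-deep if every open halfspace containing it has measure greater than `β`; the
`β`-deep points form the intersection of the closed halfspaces whose complements have measure at
most `β`. If `(d + 1) β < 1`, any `d + 1` of these halfspaces, cut down to a ball of measure
close to `1`, miss a set of measure less than `1` and hence meet, so Helly's theorem makes the
`β`-deep points a nonempty compact set. These sets decrease in `β`, so some point is `β`-deep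
for every `β < 1 / (d + 1)`; since a closed halfspace is a decreasing intersection of open ones,
every closed halfspace through that point has measure at least `1 / (d + 1)`.
-/

open MeasureTheory Metric Set Module Filter Topology
open scoped ENNReal RealInnerProductSpace

lemma tendsto_measure_compl_closedBall {α : Type*} [PseudoMetricSpace α] [MeasurableSpace α]
    [OpensMeasurableSpace α] (μ : Measure α) [IsFiniteMeasure μ] (x : α) :
    Tendsto (fun R : ℝ => μ (closedBall x R)ᶜ) atTop (𝓝 0) := by
  have hanti : Antitone fun R : ℝ => (closedBall x R)ᶜ :=
    fun _ _ h => compl_subset_compl.2 (closedBall_subset_closedBall h)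
  have hempty : ⋂ R : ℝ, (closedBall x R)ᶜ = ∅ := by
    rw [← compl_iUnion, compl_empty_iff, eq_univ_iff_forall]
    exact fun y => mem_iUnion.2 ⟨dist y x, mem_closedBall.2 le_rfl⟩
  have := tendsto_measure_iInter_atTop (μ := μ)
    (fun _ => measurableSet_closedBall.compl.nullMeasurableSet) hanti ⟨0, measure_ne_top μ _⟩
  rwa [hempty, measure_empty] at this

section Helly

variable {E : Type*} [NormedAddCommGroup E] [NormedSpace ℝ E] [FiniteDimensional ℝ E]
  [MeasurableSpace E] [BorelSpace E]

theorem Convex.nonempty_iInter_of_measure_compl_le (μ : Measure E) [IsFiniteMeasure μ]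
    {ι : Type*} {F : ι → Set E} {β : ℝ≥0∞} (hconv : ∀ i, Convex ℝ (F i))
    (hclosed : ∀ i, IsClosed (F i)) (hF : ∀ i, μ (F i)ᶜ ≤ β)
    (hβ : (finrank ℝ E + 1) * β < μ univ) :
    (⋂ i, F i).Nonempty := by
  obtain ⟨R, hR⟩ : ∃ R : ℝ, μ (closedBall 0 R)ᶜ < μ univ - (finrank ℝ E + 1) * β :=
    ((tendsto_order.1 (tendsto_measure_compl_closedBall μ 0)).2 _ (tsub_pos_of_lt hβ)).exists
  set B := closedBall (0 : E) R
  -- Cutting the sets down to `B` makes them compact at the cost of the slack left in `hβ`.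
  refine (helly_theorem_compact' (𝕜 := ℝ) (F := fun i => F i ∩ B)
    (fun i => (hconv i).inter (convex_closedBall 0 R))
    (fun i => (isCompact_closedBall 0 R).inter_left (hclosed i)) fun I hI => ?_).mono
    (iInter_mono fun i => inter_subset_left)
  by_contra hempty
  have hcover : univ ⊆ Bᶜ ∪ ⋃ i ∈ I, (F i)ᶜ := by
    intro y _
    by_contra hy
    simp only [mem_union, mem_compl_iff, mem_iUnion, not_or, not_exists, not_not] at hy
    exact hempty ⟨y, mem_iInter₂.2 fun i hi => ⟨hy.2 i hi, hy.1⟩⟩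
  have hsum : ∑ i ∈ I, μ (F i)ᶜ ≤ (finrank ℝ E + 1) * β := calc
    ∑ i ∈ I, μ (F i)ᶜ ≤ I.card * β := by simpa using Finset.sum_le_card_nsmul I _ β fun i _ => hF i
    _ ≤ (finrank ℝ E + 1) * β := by gcongr; exact_mod_cast hI
  refine lt_irrefl (μ univ) ?_
  calc
    μ univ ≤ μ Bᶜ + ∑ i ∈ I, μ (F i)ᶜ :=
      (measure_mono hcover).trans <| (measure_union_le _ _).trans <| by
        gcongr; exact measure_biUnion_finset_le I _
    _ < μ univ := by grw [hsum]; exact lt_tsub_iff_right.1 hR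

end Helly

section Halfspace

variable {E : Type*} [NormedAddCommGroup E] [InnerProductSpace ℝ E]

def halfspace (u : E) (c : ℝ) : Set E := {y | c ≤ ⟪u, y⟫}

@[simp]
lemma mem_halfspace {u y : E} {c : ℝ} : y ∈ halfspace u c ↔ c ≤ ⟪u, y⟫ := Iff.rfl

lemma isClosed_halfspace (u : E) (c : ℝ) : IsClosed (halfspace u c) :=
  isClosed_le continuous_const (continuous_const.inner continuous_id)

lemma convex_halfspace (u : E) (c : ℝ) : Convex ℝ (halfspace u c) :=
  convex_halfSpace_ge (innerₛₗ ℝ u).isLinear c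

lemma closedBall_subset_halfspace_neg (R : ℝ) (x : E) :
    closedBall 0 R ⊆ halfspace (-x) (-(R * ‖x‖)) := by
  intro y hy
  have : ⟪x, y⟫ ≤ R * ‖x‖ := calc
    ⟪x, y⟫ ≤ ‖x‖ * ‖y‖ := real_inner_le_norm x y
    _ ≤ R * ‖x‖ := by rw [mul_comm]; gcongr; exact mem_closedBall_zero_iff.1 hy
  rw [mem_halfspace, inner_neg_left]
  linarith

lemma antitone_compl_halfspace_neg (u : E) (c : ℝ) :
    Antitone fun n : ℕ => (halfspace (-u) (1 / (n + 1) - c))ᶜ := by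
  refine fun m n hmn => compl_subset_compl.2 fun y hy => ?_
  have : 1 / ((n : ℝ) + 1) ≤ 1 / ((m : ℝ) + 1) := Nat.one_div_le_one_div hmn
  rw [mem_halfspace] at hy ⊢
  linarith

lemma iInter_compl_halfspace_neg (u : E) (c : ℝ) :
    ⋂ n : ℕ, (halfspace (-u) (1 / (n + 1) - c))ᶜ = halfspace u c := by
  ext y
  simp only [mem_iInter, mem_compl_iff, mem_halfspace, inner_neg_left, not_le]
  refine ⟨fun h => le_of_forall_pos_lt_add fun ε hε => ?_, fun h n => ?_⟩
  · obtain ⟨n, hn⟩ := exists_nat_one_div_lt hε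
    linarith [h n]
  · have : (0 : ℝ) < 1 / (n + 1) := Nat.one_div_pos_of_nat
    linarith

variable [MeasurableSpace E] (μ : Measure E)

noncomputable def halfspaceDepth (x : E) : ℝ≥0∞ :=
  sInf {r | ∃ (u : E) (c : ℝ), u ≠ 0 ∧ c ≤ ⟪u, x⟫ ∧ r = μ (halfspace u c)}

/-- The points every open halfspace through which has measure greater than `β`. -/
def trimmedRegion (β : ℝ≥0∞) : Set E :=
  ⋂ (u : E) (c : ℝ) (_ : μ (halfspace u c)ᶜ ≤ β), halfspace u c

lemma mem_trimmedRegion {β : ℝ≥0∞} {x : E} :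
    x ∈ trimmedRegion μ β ↔ ∀ u c, μ (halfspace u c)ᶜ ≤ β → x ∈ halfspace u c := by
  simp only [trimmedRegion, mem_iInter]

lemma isClosed_trimmedRegion (β : ℝ≥0∞) : IsClosed (trimmedRegion μ β) :=
  isClosed_iInter fun u => isClosed_iInter fun c => isClosed_iInter fun _ =>
    isClosed_halfspace u c

lemma trimmedRegion_antitone : Antitone (trimmedRegion μ) := fun _ _ hβ _ hx =>
  (mem_trimmedRegion μ).2 fun u c h => (mem_trimmedRegion μ).1 hx u c (h.trans hβ)

lemma trimmedRegion_subset_closedBall {β : ℝ≥0∞} {R : ℝ} (hR : 0 ≤ R)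
    (hβ : μ (closedBall 0 R)ᶜ ≤ β) : trimmedRegion μ β ⊆ closedBall 0 R := by
  intro x hx
  by_contra hxR
  have hxR : R < ‖x‖ := by simpa using hxR
  have hx' := (mem_trimmedRegion μ).1 hx _ _
    ((measure_mono (compl_subset_compl.2 (closedBall_subset_halfspace_neg R x))).trans hβ)
  rw [mem_halfspace, inner_neg_left, real_inner_self_eq_norm_sq] at hx'
  nlinarith

variable [BorelSpace E] [FiniteDimensional ℝ E] [IsFiniteMeasure μ]

lemma isCompact_trimmedRegion {β : ℝ≥0∞} (hβ : 0 < β) : IsCompact (trimmedRegion μ β) := by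
  obtain ⟨R, hR, hR0⟩ := (((tendsto_order.1 (tendsto_measure_compl_closedBall μ 0)).2 β hβ).and
    (eventually_ge_atTop 0)).exists
  exact (isCompact_closedBall 0 R).of_isClosed_subset (isClosed_trimmedRegion μ β)
    (trimmedRegion_subset_closedBall μ hR0 hR.le)

lemma trimmedRegion_nonempty {β : ℝ≥0∞} (hβ : (finrank ℝ E + 1) * β < μ univ) :
    (trimmedRegion μ β).Nonempty := by
  obtain ⟨x, hx⟩ := Convex.nonempty_iInter_of_measure_compl_le μ
    (F := fun p : {p : E × ℝ // μ (halfspace p.1 p.2)ᶜ ≤ β} => halfspace p.1.1 p.1.2)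
    (fun p => convex_halfspace _ _) (fun p => isClosed_halfspace _ _) (fun p => p.2) hβ
  exact ⟨x, (mem_trimmedRegion μ).2 fun u c h => mem_iInter.1 hx ⟨(u, c), h⟩⟩

lemma exists_forall_mem_trimmedRegion {α : ℝ≥0∞} (hα₀ : 0 < α)
    (hα : (finrank ℝ E + 1) * α ≤ μ univ) :
    ∃ x, ∀ β < α, x ∈ trimmedRegion μ β := by
  have : Nonempty (Ioo 0 α) := nonempty_Ioo_subtype hα₀
  have hlt (β : Ioo 0 α) : (finrank ℝ E + 1) * (β : ℝ≥0∞) < μ univ :=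
    hα.trans_lt' <| ENNReal.mul_lt_mul_right (by positivity) (by simp) β.2.2
  obtain ⟨x, hx⟩ := IsCompact.nonempty_iInter_of_directed_nonempty_isCompact_isClosed
    (fun β : Ioo 0 α => trimmedRegion μ β)
    ((trimmedRegion_antitone μ).comp_monotone (Subtype.mono_coe _)).directed_ge
    (fun β => trimmedRegion_nonempty μ (hlt β))
    (fun β => isCompact_trimmedRegion μ β.2.1) (fun β => isClosed_trimmedRegion μ β)
  refine ⟨x, fun β hβ => ?_⟩
  obtain ⟨β', hββ', hβ'α⟩ := exists_between hβ
  exact trimmedRegion_antitone μ hββ'.le (mem_iInter.1 hx ⟨β', zero_le.trans_lt hββ', hβ'α⟩)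

omit [BorelSpace E] [FiniteDimensional ℝ E] in
lemma le_halfspaceDepth_of_forall_mem_trimmedRegion [OpensMeasurableSpace E] {α : ℝ≥0∞} {x : E}
    (hx : ∀ β < α, x ∈ trimmedRegion μ β) : α ≤ halfspaceDepth μ x := by
  refine le_sInf ?_
  rintro _ ⟨u, c, -, hcx, rfl⟩
  by_contra! hlt
  have hlim : Tendsto (fun n : ℕ => μ (halfspace (-u) (1 / (n + 1) - c))ᶜ) atTop
      (𝓝 (μ (halfspace u c))) := by
    rw [← iInter_compl_halfspace_neg u c]
    exact tendsto_measure_iInter_atTop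
      (fun n => (isClosed_halfspace _ _).measurableSet.compl.nullMeasurableSet)
      (antitone_compl_halfspace_neg u c) ⟨0, measure_ne_top μ _⟩
  obtain ⟨n, hn⟩ := ((tendsto_order.1 hlim).2 α hlt).exists
  have hxn := (mem_trimmedRegion μ).1 (hx _ hn) _ _ le_rfl
  have : (0 : ℝ) < 1 / (n + 1) := Nat.one_div_pos_of_nat
  rw [mem_halfspace, inner_neg_left] at hxn
  linarith

omit [IsFiniteMeasure μ] in
theorem exists_le_halfspaceDepth [IsProbabilityMeasure μ] :
    ∃ x, (finrank ℝ E + 1 : ℝ≥0∞)⁻¹ ≤ halfspaceDepth μ x := by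
  obtain ⟨x, hx⟩ := exists_forall_mem_trimmedRegion μ
    (α := (finrank ℝ E + 1 : ℝ≥0∞)⁻¹) (ENNReal.inv_pos.2 (by simp))
    (by rw [measure_univ, ENNReal.mul_inv_cancel] <;> simp)
  exact ⟨x, le_halfspaceDepth_of_forall_mem_trimmedRegion μ hx⟩

end Halfspace

/-- Centerpoint theorem for measures: for any probability measure on ℝ^d there is a point
whose Tukey (halfspace) depth is at least `1/(d+1)`. -/
theorem exists_point_tukey_depth_ge (d : ℕ) (μ : Measure (EuclideanSpace ℝ (Fin d)))
    [IsProbabilityMeasure μ] :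
    ∃ x : EuclideanSpace ℝ (Fin d),
      ((d : ℝ≥0∞) + 1)⁻¹ ≤
        sInf {r : ℝ≥0∞ | ∃ (u : EuclideanSpace ℝ (Fin d)) (c : ℝ),
          u ≠ 0 ∧ c ≤ ⟪u, x⟫ ∧ r = μ {y | c ≤ ⟪u, y⟫}} := by
  obtain ⟨x, hx⟩ := exists_le_halfspaceDepth μ
  rw [finrank_euclideanSpace_fin] at hx
  exact ⟨x, hx⟩
end

section
/- For any finite set of n points in ℝ^d there exists a point x ∈ ℝ^d such that every closed halfspace containing x contains at least ⌈n/(d+1)⌉ of the points. -/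
open scoped RealInnerProductSpace
open Finset

/-- Discrete centerpoint theorem: for any `n` points in ℝ^d there is a point `c` such that
every closed halfspace containing `c` contains at least `⌈n/(d+1)⌉` of the points. -/
theorem discrete_centerpoint (d n : ℕ) (x : Fin n → EuclideanSpace ℝ (Fin d)) :
    ∃ c : EuclideanSpace ℝ (Fin d), ∀ (u : EuclideanSpace ℝ (Fin d)) (b : ℝ),
      u ≠ 0 → b ≤ ⟪u, c⟫ →
      ⌈(n : ℝ) / (d + 1)⌉₊ ≤ {i : Fin n | b ≤ ⟪u, x i⟫}.ncard := by
  classical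
  set k := ⌈(n : ℝ) / (d + 1)⌉₊ with hk
  by_cases hk0 : k = 0
  · exact ⟨0, fun u b _ _ => by simp [hk0]⟩
  have hk1 : 1 ≤ k := Nat.one_le_iff_ne_zero.mpr hk0
  -- the key numerical inequality : (d+1)*(k-1) < n
  have hkey : (d + 1) * (k - 1) < n := by
    have h1 : ((k - 1 : ℕ) : ℝ) < (n : ℝ) / ((d : ℝ) + 1) := by
      apply Nat.lt_ceil.mp
      · omega
    have hd : (0 : ℝ) < (d : ℝ) + 1 := by positivity
    have h2 : ((k - 1 : ℕ) : ℝ) * ((d : ℝ) + 1) < (n : ℝ) :=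
      (lt_div_iff₀ hd).mp h1
    have h3 : (((d + 1) * (k - 1) : ℕ) : ℝ) < (n : ℝ) := by
      push_cast
      linarith
    exact_mod_cast h3
  set s : Finset (Finset (Fin n)) :=
    Finset.univ.filter (fun S => n + 1 ≤ S.card + k) with hs
  have hHelly :
      (⋂ S ∈ s, convexHull ℝ (x '' (S : Set (Fin n)))).Nonempty := by
    apply Convex.helly_theorem' (𝕜 := ℝ)
    · intro S _
      exact convex_convexHull ℝ _
    · intro I hIs hIcard
      rw [finrank_euclideanSpace_fin] at hIcard
      -- find a point in all sets of I
      have hcardB : (I.biUnion fun S => Sᶜ).card < n := by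
        calc (I.biUnion fun S => Sᶜ).card ≤ ∑ S ∈ I, Sᶜ.card :=
              Finset.card_biUnion_le
          _ ≤ ∑ _S ∈ I, (k - 1) := by
              apply Finset.sum_le_sum
              intro S hSI
              have hS : S ∈ s := hIs hSI
              rw [hs, Finset.mem_filter] at hS
              have hScard : S.card ≤ n := by simpa using Finset.card_le_univ S
              rw [Finset.card_compl, Fintype.card_fin]
              omega
          _ = I.card * (k - 1) := by
              rw [Finset.sum_const, smul_eq_mul]
          _ ≤ (d + 1) * (k - 1) := Nat.mul_le_mul_right _ hIcard
          _ < n := hkey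
      have : ∃ i : Fin n, i ∉ I.biUnion fun S => Sᶜ := by
        by_contra h
        push_neg at h
        have : (I.biUnion fun S => Sᶜ) = Finset.univ :=
          Finset.eq_univ_iff_forall.mpr h
        rw [this, Finset.card_univ, Fintype.card_fin] at hcardB
        exact lt_irrefl _ hcardB
      obtain ⟨i, hi⟩ := this
      refine ⟨x i, Set.mem_iInter₂.mpr fun S hSI => ?_⟩
      have hiS : i ∈ S := by
        by_contra hiS
        exact hi (Finset.mem_biUnion.mpr ⟨S, hSI, Finset.mem_compl.mpr hiS⟩)
      exact subset_convexHull ℝ _ ⟨i, by simpa using hiS, rfl⟩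
  obtain ⟨c, hc⟩ := hHelly
  refine ⟨c, fun u b _ hbc => ?_⟩
  -- relate ncard to a Finset card
  set T : Finset (Fin n) := Finset.univ.filter (fun i => b ≤ ⟪u, x i⟫) with hT
  have hncard : ({i : Fin n | b ≤ ⟪u, x i⟫} : Set (Fin n)).ncard = T.card := by
    rw [Set.ncard_eq_toFinset_card']
    congr 1
    ext i
    simp [hT]
  rw [hncard]
  by_contra hlt
  push_neg at hlt
  -- Tᶜ is big enough to be in s
  have hTc : Tᶜ ∈ s := by
    rw [hs, Finset.mem_filter]
    refine ⟨Finset.mem_univ _, ?_⟩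
    rw [Finset.card_compl, Fintype.card_fin]
    have : T.card ≤ n := by simpa using Finset.card_le_univ T
    omega
  have hcmem : c ∈ convexHull ℝ (x '' ((Tᶜ : Finset (Fin n)) : Set (Fin n))) :=
    Set.mem_iInter₂.mp hc _ hTc
  -- the open halfspace is convex and contains the image, hence contains c
  have hlin : IsLinearMap ℝ (fun y : EuclideanSpace ℝ (Fin d) => ⟪u, y⟫) :=
    ⟨fun a b => inner_add_right u a b, fun c y => real_inner_smul_right u y c⟩
  have hsub : convexHull ℝ (x '' ((Tᶜ : Finset (Fin n)) : Set (Fin n))) ⊆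
      {y : EuclideanSpace ℝ (Fin d) | ⟪u, y⟫ < b} := by
    apply convexHull_min
    · rintro _ ⟨i, hi, rfl⟩
      have : i ∉ T := by simpa using hi
      rw [hT, Finset.mem_filter] at this
      push_neg at this
      exact this (Finset.mem_univ i)
    · exact convex_halfSpace_lt hlin b
  have := hsub hcmem
  simp only [Set.mem_setOf_eq] at this
  linarith
end

section
/- For the Tukey depth of the empirical measure of n points in ℝ^d and α ∈ (0,1], the level set S_α equals the intersection of all closed balls containing at least ⌊n(1-α)+1⌋ = ⌊n(1-α)⌋ + 1 of the data points (counted with multiplicity). -/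
open MeasureTheory
open scoped ENNReal RealInnerProductSpace

/-- Tukey halfspace depth of `x` with respect to `μ`. -/
noncomputable def tukeyDepth {d : ℕ} (μ : Measure (EuclideanSpace ℝ (Fin d)))
    (x : EuclideanSpace ℝ (Fin d)) : ℝ≥0∞ :=
  sInf {r : ℝ≥0∞ | ∃ (u : EuclideanSpace ℝ (Fin d)) (c : ℝ),
    u ≠ 0 ∧ c ≤ ⟪u, x⟫ ∧ r = μ {y | c ≤ ⟪u, y⟫}}

/-!
A point `y` outside a closed ball `B` is separated from it by the closed halfspace through `y`
with normal pointing away from the centre, so if `B` holds more than `n(1-α)` data points this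
halfspace holds fewer than `nα`, and the depth of `y` is below `α`. Conversely, a closed halfspace
through `y` holding fewer than `nα` data points leaves more than `n(1-α)` of them in the open
complementary halfspace; a finite subset of an open halfspace fits in a closed ball missing the
closed complementary halfspace (take a huge ball whose centre runs off to infinity along the inner
normal), and this ball excludes `y`.
-/

open Set Metric Filter

section Geometry

variable {E : Type*} [NormedAddCommGroup E] [InnerProductSpace ℝ E]

theorem inner_sub_lt_inner_sub_of_mem_closedBall_of_notMem {y z p : E} {ρ : ℝ}
    (hp : p ∈ closedBall z ρ) (hy : y ∉ closedBall z ρ) : ⟪y - z, p⟫ < ⟪y - z, y⟫ := by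
  rw [mem_closedBall, dist_eq_norm] at hp hy
  have hpy : ‖p - z‖ < ‖y - z‖ := hp.trans_lt (not_le.1 hy)
  have hcs : ⟪y - z, p - z⟫ ≤ ‖y - z‖ * ‖p - z‖ := real_inner_le_norm _ _
  have hself : ⟪y - z, y - z⟫ = ‖y - z‖ ^ 2 := real_inner_self_eq_norm_sq _
  rw [inner_sub_right] at hcs hself
  nlinarith [norm_nonneg (p - z)]

theorem eventually_norm_add_smul_lt {u p : E} {c : ℝ} (hp : ⟪u, p⟫ < c) :
    ∀ᶠ t : ℝ in atTop, ∀ q, c ≤ ⟪u, q⟫ → ‖p + t • u‖ < ‖q + t • u‖ := by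
  filter_upwards [eventually_gt_atTop (‖p‖ ^ 2 / (2 * (c - ⟪u, p⟫))), eventually_ge_atTop 0]
    with t ht ht0 q hq
  have hgap : ‖p‖ ^ 2 < 2 * t * (c - ⟪u, p⟫) := by
    rw [div_lt_iff₀ (by linarith)] at ht
    linarith
  refine lt_of_pow_lt_pow_left₀ 2 (norm_nonneg _) ?_
  simp only [norm_add_sq_real, inner_smul_right, norm_smul, mul_pow, Real.norm_eq_abs, sq_abs,
    real_inner_comm u]
  nlinarith [sq_nonneg ‖q‖]

theorem exists_closedBall_superset_disjoint_halfspace {s : Set E} (hs : s.Finite)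
    (hne : s.Nonempty) {u : E} {c : ℝ} (h : ∀ p ∈ s, ⟪u, p⟫ < c) :
    ∃ z ρ, 0 ≤ ρ ∧ s ⊆ closedBall z ρ ∧ Disjoint (closedBall z ρ) {q | c ≤ ⟪u, q⟫} := by
  obtain ⟨t, ht⟩ := (hs.eventually_all.2 fun p hp => eventually_norm_add_smul_lt (h p hp)).exists
  obtain ⟨p₀, hp₀, hmax⟩ := s.exists_max_image (fun p => ‖p + t • u‖) hs hne
  have hdist : ∀ q, dist q (-(t • u)) = ‖q + t • u‖ := fun q => by
    rw [dist_eq_norm, sub_neg_eq_add]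
  refine ⟨-(t • u), ‖p₀ + t • u‖, norm_nonneg _, fun p hp => ?_, ?_⟩
  · rw [mem_closedBall, hdist]
    exact hmax p hp
  · refine Set.disjoint_left.2 fun q hq hqc => ?_
    rw [mem_closedBall, hdist] at hq
    exact (ht p₀ hp₀ q hqc).not_ge hq

end Geometry

theorem ncard_add_ncard_le_of_disjoint {α : Type*} [Finite α] {s t : Set α} (h : Disjoint s t) :
    s.ncard + t.ncard ≤ Nat.card α :=
  ncard_union_eq h ▸ ncard_le_card (s ∪ t)

theorem sum_dirac_apply {ι α : Type*} [Fintype ι] [MeasurableSpace α]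
    [MeasurableSingletonClass α] (x : ι → α) (S : Set α) :
    (∑ i, Measure.dirac (x i)) S = {i | x i ∈ S}.ncard := by
  classical
  rw [Measure.finsetSum_apply, ncard_eq_toFinset_card', toFinset_ofPred]
  simp [Measure.dirac_apply, indicator_apply, Finset.sum_boole]

theorem ofReal_le_inv_mul_natCast_iff {n m : ℕ} (hn : 0 < n) {a : ℝ} (ha : 0 ≤ a) :
    ENNReal.ofReal a ≤ (n : ℝ≥0∞)⁻¹ * m ↔ n * a ≤ m := by
  rw [← ENNReal.div_eq_inv_mul, ENNReal.le_div_iff_mul_le (by simp [hn.ne']) (by simp),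
    ← ENNReal.ofReal_natCast n, ← ENNReal.ofReal_mul ha, ← ENNReal.ofReal_natCast m,
    ENNReal.ofReal_le_ofReal_iff (Nat.cast_nonneg m), mul_comm]

theorem le_tukeyDepth_iff {d : ℕ} {μ : Measure (EuclideanSpace ℝ (Fin d))}
    {y : EuclideanSpace ℝ (Fin d)} {r : ℝ≥0∞} :
    r ≤ tukeyDepth μ y ↔ ∀ u c, u ≠ 0 → c ≤ ⟪u, y⟫ → r ≤ μ {p | c ≤ ⟪u, p⟫} := by
  simp only [tukeyDepth, le_sInf_iff, mem_ofPred_eq]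
  constructor
  · exact fun h u c hu hc => h _ ⟨u, c, hu, hc, rfl⟩
  · rintro h _ ⟨u, c, hu, hc, rfl⟩
    exact h u c hu hc

section DataPoints

variable {E : Type*} [NormedAddCommGroup E] [InnerProductSpace ℝ E] {n : ℕ} (x : Fin n → E)

theorem mem_closedBall_of_forall_le_ncard_halfspace {a : ℝ} {y z : E} {ρ : ℝ} (hρ : 0 ≤ ρ)
    (hy : ∀ u c, u ≠ 0 → c ≤ ⟪u, y⟫ → a ≤ {i | c ≤ ⟪u, x i⟫}.ncard)
    (hB : n - a < {i | x i ∈ closedBall z ρ}.ncard) : y ∈ closedBall z ρ := by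
  by_contra hyB
  have hyz : y - z ≠ 0 := sub_ne_zero.2 fun h => hyB (h ▸ mem_closedBall_self hρ)
  have hH := hy (y - z) ⟪y - z, y⟫ hyz le_rfl
  have hdisj : Disjoint {i | ⟪y - z, y⟫ ≤ ⟪y - z, x i⟫} {i | x i ∈ closedBall z ρ} :=
    Set.disjoint_left.2 fun i hi hball =>
      (inner_sub_lt_inner_sub_of_mem_closedBall_of_notMem hball hyB).not_ge hi
  have hsum :
      ({i | ⟪y - z, y⟫ ≤ ⟪y - z, x i⟫}.ncard + {i | x i ∈ closedBall z ρ}.ncard : ℝ) ≤ n :=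
    mod_cast (ncard_add_ncard_le_of_disjoint hdisj).trans_eq (Nat.card_fin n)
  linarith

theorem le_ncard_halfspace_of_forall_mem_closedBall {a : ℝ} (ha : a ≤ n) {y u : E} {c : ℝ}
    (hc : c ≤ ⟪u, y⟫)
    (hy : ∀ z ρ, 0 ≤ ρ → n - a < {i | x i ∈ closedBall z ρ}.ncard → y ∈ closedBall z ρ) :
    a ≤ {i | c ≤ ⟪u, x i⟫}.ncard := by
  by_contra! hlt
  set F := {i | c ≤ ⟪u, x i⟫}ᶜ
  have hsplit : ({i | c ≤ ⟪u, x i⟫}.ncard + F.ncard : ℝ) = n := by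
    exact_mod_cast (ncard_add_ncard_compl _).trans (Nat.card_fin n)
  have hF : n - a < F.ncard := by linarith
  have hFne : (x '' F).Nonempty :=
    (nonempty_of_ncard_ne_zero (by intro h; rw [h, Nat.cast_zero] at hF; linarith)).image x
  obtain ⟨z, ρ, hρ, hsub, hdisj⟩ := exists_closedBall_superset_disjoint_halfspace (toFinite _) hFne
    (by rintro _ ⟨i, hi, rfl⟩; exact not_le.1 hi)
  have hball : F.ncard ≤ {i | x i ∈ closedBall z ρ}.ncard :=
    ncard_le_ncard fun i hi => hsub (mem_image_of_mem x hi)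
  exact Set.disjoint_left.1 hdisj (hy z ρ hρ (hF.trans_le (mod_cast hball))) hc

end DataPoints

/-- For the empirical measure of `n` data points and `α ∈ (0,1]`, the Tukey depth level set
`S_α` equals the intersection of all closed balls containing at least `⌊n(1-α)⌋ + 1` of the
data points (with multiplicity). -/
theorem empirical_level_set_eq_inter_balls (d n : ℕ) (hn : 0 < n)
    (x : Fin n → EuclideanSpace ℝ (Fin d))
    (μ : Measure (EuclideanSpace ℝ (Fin d)))
    (hμ : μ = (n : ℝ≥0∞)⁻¹ • ∑ i, Measure.dirac (x i))
    (α : ℝ) (hα : α ∈ Set.Ioc (0 : ℝ) 1) :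
    {y | ENNReal.ofReal α ≤ tukeyDepth μ y} =
      ⋂₀ {B : Set (EuclideanSpace ℝ (Fin d)) |
        ∃ (z : EuclideanSpace ℝ (Fin d)) (ρ : ℝ), 0 ≤ ρ ∧ B = Metric.closedBall z ρ ∧
          ⌊(n : ℝ) * (1 - α)⌋₊ + 1 ≤ {i : Fin n | x i ∈ B}.ncard} := by
  obtain ⟨hα0, hα1⟩ := hα
  have hfat (m : ℕ) : ⌊(n : ℝ) * (1 - α)⌋₊ + 1 ≤ m ↔ n - n * α < m := by
    rw [Nat.add_one_le_iff, Nat.floor_lt (by nlinarith), mul_one_sub]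
  have hdepth (S : Set (EuclideanSpace ℝ (Fin d))) :
      ENNReal.ofReal α ≤ μ S ↔ n * α ≤ {i | x i ∈ S}.ncard := by
    rw [hμ, Measure.smul_apply, smul_eq_mul, sum_dirac_apply,
      ofReal_le_inv_mul_natCast_iff hn hα0.le]
  ext y
  simp only [mem_ofPred_eq, mem_sInter, le_tukeyDepth_iff, hdepth]
  constructor
  · rintro hy _ ⟨z, ρ, hρ, rfl, hB⟩
    exact mem_closedBall_of_forall_le_ncard_halfspace x hρ hy ((hfat _).1 hB)
  · intro hy u c _ hc
    exact le_ncard_halfspace_of_forall_mem_closedBall x (by nlinarith) hc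
      fun z ρ hρ hB => hy _ ⟨z, ρ, hρ, rfl, (hfat _).2 hB⟩
end

section
/- For the coordinate-wise box depth in ℝ^d (depth based on axis-parallel closed boxes), the maximum depth is at least 1/2 and is attained at the coordinate-wise median. -/
open MeasureTheory
open scoped ENNReal

/-!
Every box avoiding the coordinate-wise median `m` misses, in some coordinate, one of the two
closed half-spaces through `m`, each of which carries mass at least `1/2`; so boxes avoiding `m`
have mass at most `1/2`. Conversely, if `x ≠ m` then `x i ≠ m i` for some `i`, and the closed
half-space through `m` on the far side from `x` is exhausted by boxes avoiding `x`, so boxes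
avoiding `x` reach mass `1/2`.
-/

section BoxDepth

variable {ι : Type*}

def closedBox (a b : ι → ℝ) : Set (EuclideanSpace ℝ ι) := {y | ∀ i, a i ≤ y i ∧ y i ≤ b i}

/-- The box depth `D_𝒱(x; μ)` is `1 - avoidingBoxMass μ x`. -/
noncomputable def avoidingBoxMass (μ : Measure (EuclideanSpace ℝ ι)) (x : EuclideanSpace ℝ ι) :
    ℝ≥0∞ :=
  sSup {r | ∃ a b : ι → ℝ, x ∉ closedBox a b ∧ r = μ (closedBox a b)}

lemma iUnion_closedBox_neg_natCast [Fintype ι] :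
    ⋃ n : ℕ, closedBox (fun _ : ι ↦ -(n : ℝ)) (fun _ ↦ n) = Set.univ := by
  refine Set.eq_univ_of_forall fun y ↦ ?_
  obtain ⟨n, hn⟩ := exists_nat_ge ‖y‖
  exact Set.mem_iUnion.2 ⟨n, fun i ↦ abs_le.1 ((PiLp.norm_apply_le y i).trans hn)⟩

lemma monotone_closedBox_neg_natCast :
    Monotone fun n : ℕ ↦ closedBox (fun _ : ι ↦ -(n : ℝ)) (fun _ ↦ n) := by
  intro n k hnk y hy i
  have hnk' : (n : ℝ) ≤ k := Nat.cast_le.2 hnk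
  exact ⟨by linarith [(hy i).1], by linarith [(hy i).2]⟩

lemma measure_le_avoidingBoxMass [Fintype ι] (μ : Measure (EuclideanSpace ℝ ι))
    {x : EuclideanSpace ℝ ι} {s : Set (EuclideanSpace ℝ ι)}
    (hs : ∀ n : ℕ, ∃ a b, x ∉ closedBox a b ∧
      s ∩ closedBox (fun _ ↦ -(n : ℝ)) (fun _ ↦ n) ⊆ closedBox a b) :
    μ s ≤ avoidingBoxMass μ x := by
  have hunion : ⋃ n : ℕ, s ∩ closedBox (fun _ ↦ -(n : ℝ)) (fun _ ↦ n) = s := by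
    rw [← Set.inter_iUnion, iUnion_closedBox_neg_natCast, Set.inter_univ]
  have hmono : Monotone fun n : ℕ ↦ s ∩ closedBox (fun _ ↦ -(n : ℝ)) (fun _ ↦ n) :=
    fun n k hnk ↦ Set.inter_subset_inter_right s (monotone_closedBox_neg_natCast hnk)
  rw [← hunion, hmono.measure_iUnion]
  refine iSup_le fun n ↦ ?_
  obtain ⟨a, b, hx, hsub⟩ := hs n
  exact (measure_mono hsub).trans (le_sSup ⟨a, b, hx, rfl⟩)

lemma measure_coord_le_le_avoidingBoxMass [Fintype ι] [DecidableEq ι]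
    (μ : Measure (EuclideanSpace ℝ ι)) {x : EuclideanSpace ℝ ι} {i : ι} {c : ℝ} (hc : c < x i) :
    μ {y | y i ≤ c} ≤ avoidingBoxMass μ x := by
  refine measure_le_avoidingBoxMass μ fun n ↦
    ⟨fun _ ↦ -(n : ℝ), Function.update (fun _ ↦ (n : ℝ)) i c, fun hx ↦ ?_, fun y hy j ↦ ?_⟩
  · have := (hx i).2
    simp only [Function.update_self] at this
    linarith
  · refine ⟨(hy.2 j).1, ?_⟩
    rcases eq_or_ne j i with rfl | hji
    · simpa using hy.1
    · simpa [hji] using (hy.2 j).2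

lemma measure_le_coord_le_avoidingBoxMass [Fintype ι] [DecidableEq ι]
    (μ : Measure (EuclideanSpace ℝ ι)) {x : EuclideanSpace ℝ ι} {i : ι} {c : ℝ} (hc : x i < c) :
    μ {y | c ≤ y i} ≤ avoidingBoxMass μ x := by
  refine measure_le_avoidingBoxMass μ fun n ↦
    ⟨Function.update (fun _ ↦ -(n : ℝ)) i c, fun _ ↦ n, fun hx ↦ ?_, fun y hy j ↦ ?_⟩
  · have := (hx i).1
    simp only [Function.update_self] at this
    linarith
  · refine ⟨?_, (hy.2 j).2⟩
    rcases eq_or_ne j i with rfl | hji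
    · simpa using hy.1
    · simpa [hji] using (hy.2 j).1

lemma exists_subset_compl_of_notMem_closedBox {a b : ι → ℝ} {m : EuclideanSpace ℝ ι}
    (hm : m ∉ closedBox a b) :
    ∃ i, closedBox a b ⊆ {y | y i ≤ m i}ᶜ ∨ closedBox a b ⊆ {y | m i ≤ y i}ᶜ := by
  simp only [closedBox, Set.mem_ofPred_eq, not_forall, not_and_or, not_le] at hm
  obtain ⟨i, hi | hi⟩ := hm
  · exact ⟨i, .inl fun y hy hyi ↦ (hi.trans_le ((hy i).1.trans hyi)).false⟩
  · exact ⟨i, .inr fun y hy hyi ↦ (hi.trans_le (hyi.trans (hy i).2)).false⟩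

lemma avoidingBoxMass_le_one_sub (μ : Measure (EuclideanSpace ℝ ι)) [IsProbabilityMeasure μ]
    {m : EuclideanSpace ℝ ι} {t : ℝ≥0∞}
    (hm : ∀ i, t ≤ μ {y | y i ≤ m i} ∧ t ≤ μ {y | m i ≤ y i}) :
    avoidingBoxMass μ m ≤ 1 - t := by
  refine sSup_le ?_
  rintro r ⟨a, b, hmab, rfl⟩
  obtain ⟨i, hsub | hsub⟩ := exists_subset_compl_of_notMem_closedBox hmab
  · calc μ (closedBox a b) ≤ μ {y | y i ≤ m i}ᶜ := measure_mono hsub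
      _ = 1 - μ {y | y i ≤ m i} := prob_compl_eq_one_sub (measurableSet_le (by fun_prop) measurable_const)
      _ ≤ 1 - t := tsub_le_tsub_left (hm i).1 1
  · calc μ (closedBox a b) ≤ μ {y | m i ≤ y i}ᶜ := measure_mono hsub
      _ = 1 - μ {y | m i ≤ y i} := prob_compl_eq_one_sub (measurableSet_le measurable_const (by fun_prop))
      _ ≤ 1 - t := tsub_le_tsub_left (hm i).2 1

lemma le_avoidingBoxMass_of_ne [Fintype ι] (μ : Measure (EuclideanSpace ℝ ι))
    {m x : EuclideanSpace ℝ ι} {t : ℝ≥0∞}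
    (hm : ∀ i, t ≤ μ {y | y i ≤ m i} ∧ t ≤ μ {y | m i ≤ y i}) (hx : x ≠ m) :
    t ≤ avoidingBoxMass μ x := by
  classical
  obtain ⟨i, hi⟩ : ∃ i, x i ≠ m i := by
    by_contra! h
    exact hx (PiLp.ext h)
  rcases hi.lt_or_gt with hlt | hgt
  · exact (hm i).2.trans (measure_le_coord_le_avoidingBoxMass μ hlt)
  · exact (hm i).1.trans (measure_coord_le_le_avoidingBoxMass μ hgt)

end BoxDepth

/-- For the depth based on axis-parallel closed boxes in ℝ^d, the maximal depth is at least
`1/2` and it is attained at the coordinate-wise median. -/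
theorem box_depth_max_at_coordinatewise_median (d : ℕ)
    (μ : Measure (EuclideanSpace ℝ (Fin d))) [IsProbabilityMeasure μ]
    (D : EuclideanSpace ℝ (Fin d) → ℝ≥0∞)
    (hD : ∀ x, D x = 1 - sSup {r : ℝ≥0∞ | ∃ a b : Fin d → ℝ,
      x ∉ {y : EuclideanSpace ℝ (Fin d) | ∀ i, a i ≤ y i ∧ y i ≤ b i} ∧
      r = μ {y : EuclideanSpace ℝ (Fin d) | ∀ i, a i ≤ y i ∧ y i ≤ b i}})
    (m : EuclideanSpace ℝ (Fin d))
    (hm : ∀ i : Fin d, (2 : ℝ≥0∞)⁻¹ ≤ μ {y : EuclideanSpace ℝ (Fin d) | y i ≤ m i} ∧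
      (2 : ℝ≥0∞)⁻¹ ≤ μ {y : EuclideanSpace ℝ (Fin d) | m i ≤ y i}) :
    (2 : ℝ≥0∞)⁻¹ ≤ D m ∧ ∀ x, D x ≤ D m := by
  have hD' : ∀ x, D x = 1 - avoidingBoxMass μ x := hD
  have hDm : 2⁻¹ ≤ D m := by
    rw [hD', ← ENNReal.one_sub_inv_two]
    exact tsub_le_tsub_left (ENNReal.one_sub_inv_two ▸ avoidingBoxMass_le_one_sub μ hm) 1
  refine ⟨hDm, fun x ↦ ?_⟩
  rcases eq_or_ne x m with rfl | hxm
  · rfl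
  calc D x = 1 - avoidingBoxMass μ x := hD' x
    _ ≤ 1 - 2⁻¹ := tsub_le_tsub_left (le_avoidingBoxMass_of_ne μ hm hxm) 1
    _ = 2⁻¹ := ENNReal.one_sub_inv_two
    _ ≤ D m := hDm
end
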